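/- Fix α, r ∈ ℝ. For v > 0 with Δ(v) := (v/2 − α)² + 2vr > 0, let d₁(v) := ((v/2 − α) − √Δ(v))/v and d₂(v) := ((v/2 − α) + √Δ(v))/v. Then at every such v the function d₂ is differentiable with d₂′(v) = 2(α·d₂(v) − r)/(v²(d₂(v) − d₁(v))); moreover α·d₂(v) − r = (v/2)·d₂(v)(1 − d₂(v)), so that d₂′(v) has the same sign as d₂(v)(1 − d₂(v)): it is positive if 0 < d₂(v) < 1, zero if d₂(v) ∈ {0,1}, and negative if d₂(v) < 0 or d₂(v) > 1. In particular, for r > 0 one has d₂′(v) < 0 if α < r, d₂′(v) = 0 if α = r, and d₂′(v) > 0 if α > r. -/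

import Mathlib

/-! Implicit differentiation of `P_v(d₂(v)) = 0` explains the formula: `∂P/∂v = (d² − d)/2` and
`∂P/∂d (d₂) = (v/2)(d₂ − d₁)`, so `d₂′ = d₂(1 − d₂) / (v (d₂ − d₁))`, and `P_v(d₂) = 0` turns
`(v/2) d₂(1 − d₂)` into `α d₂ − r`. For `r > 0` the roots straddle `0`, so the factorisation
`α − r = P(1) = (v/2)(1 − d₁)(1 − d₂)` ties the sign of `1 − d₂` to that of `α − r`. -/

/-- The smaller root of the characteristic polynomial `P(d) = (v/2)d² + (α − v/2)d − r`,
viewed as a function of the squared volatility `v`. -/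
noncomputable def dOne (α r v : ℝ) : ℝ :=
  ((v / 2 - α) - Real.sqrt ((v / 2 - α) ^ 2 + 2 * v * r)) / v

/-- The larger root of the characteristic polynomial `P(d) = (v/2)d² + (α − v/2)d − r`,
viewed as a function of the squared volatility `v`. -/
noncomputable def dTwo (α r v : ℝ) : ℝ :=
  ((v / 2 - α) + Real.sqrt ((v / 2 - α) ^ 2 + 2 * v * r)) / v

noncomputable def charPoly (α r v d : ℝ) : ℝ :=
  v / 2 * d ^ 2 + (α - v / 2) * d - r

section

variable {α r v : ℝ}

theorem dTwo_sub_dOne (α r v : ℝ) :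
    dTwo α r v - dOne α r v = 2 * Real.sqrt ((v / 2 - α) ^ 2 + 2 * v * r) / v := by
  rw [dTwo, dOne, ← sub_div]
  ring

theorem dOne_lt_dTwo (hv : 0 < v) (hΔ : 0 < (v / 2 - α) ^ 2 + 2 * v * r) :
    dOne α r v < dTwo α r v := by
  rw [← sub_pos, dTwo_sub_dOne]
  have := Real.sqrt_pos.mpr hΔ
  positivity

theorem charPoly_eq_mul_sub_dOne_mul_sub_dTwo (hv : v ≠ 0)
    (hΔ : 0 ≤ (v / 2 - α) ^ 2 + 2 * v * r) (d : ℝ) :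
    charPoly α r v d = v / 2 * (d - dOne α r v) * (d - dTwo α r v) := by
  have hs := Real.sq_sqrt hΔ
  rw [charPoly, dOne, dTwo]
  generalize Real.sqrt ((v / 2 - α) ^ 2 + 2 * v * r) = s at hs ⊢
  field_simp
  linear_combination 4 * hs

theorem mul_dTwo_sub_eq (hv : v ≠ 0) (hΔ : 0 ≤ (v / 2 - α) ^ 2 + 2 * v * r) :
    α * dTwo α r v - r = v / 2 * dTwo α r v * (1 - dTwo α r v) := by
  have hroot := charPoly_eq_mul_sub_dOne_mul_sub_dTwo hv hΔ (dTwo α r v)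
  rw [sub_self, mul_zero, charPoly] at hroot
  linear_combination hroot

theorem dOne_neg_and_dTwo_pos (hv : 0 < v) (hr : 0 < r) :
    dOne α r v < 0 ∧ 0 < dTwo α r v := by
  have hlt : |v / 2 - α| < Real.sqrt ((v / 2 - α) ^ 2 + 2 * v * r) :=
    Real.lt_sqrt_of_sq_lt (by rw [sq_abs]; nlinarith)
  obtain ⟨hlow, hup⟩ := abs_lt.mp hlt
  exact ⟨div_neg_of_neg_of_pos (by linarith) hv, div_pos (by linarith) hv⟩

theorem sub_eq_mul_one_sub_dTwo (hv : 0 < v) (hr : 0 < r) :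
    ∃ c > 0, α - r = c * (1 - dTwo α r v) := by
  have hΔ : 0 ≤ (v / 2 - α) ^ 2 + 2 * v * r := by positivity
  refine ⟨v / 2 * (1 - dOne α r v), ?_, ?_⟩
  · have := (dOne_neg_and_dTwo_pos (α := α) hv hr).1
    nlinarith
  · rw [← charPoly_eq_mul_sub_dOne_mul_sub_dTwo hv.ne' hΔ, charPoly]
    ring

theorem one_lt_dTwo_iff (hv : 0 < v) (hr : 0 < r) : 1 < dTwo α r v ↔ α < r := by
  obtain ⟨c, hc, h⟩ := sub_eq_mul_one_sub_dTwo (α := α) hv hr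
  constructor <;> intro <;> nlinarith

theorem dTwo_eq_one_iff (hv : 0 < v) (hr : 0 < r) : dTwo α r v = 1 ↔ α = r := by
  obtain ⟨c, hc, h⟩ := sub_eq_mul_one_sub_dTwo (α := α) hv hr
  rw [← sub_eq_zero (a := α), h, mul_eq_zero, or_iff_right hc.ne', sub_eq_zero, eq_comm]

theorem dTwo_lt_one_iff (hv : 0 < v) (hr : 0 < r) : dTwo α r v < 1 ↔ r < α := by
  obtain ⟨c, hc, h⟩ := sub_eq_mul_one_sub_dTwo (α := α) hv hr
  constructor <;> intro <;> nlinarith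

theorem hasDerivAt_dTwo (hv : v ≠ 0) (hΔ : 0 < (v / 2 - α) ^ 2 + 2 * v * r) :
    HasDerivAt (dTwo α r)
      (2 * (α * dTwo α r v - r) / (v ^ 2 * (dTwo α r v - dOne α r v))) v := by
  have hlin : HasDerivAt (fun x : ℝ => x / 2 - α) (1 / 2) v := by
    simpa using ((hasDerivAt_id v).div_const 2).sub_const α
  have hdisc : HasDerivAt (fun x : ℝ => (x / 2 - α) ^ 2 + 2 * x * r) (v / 2 - α + 2 * r) v := by
    refine ((hlin.pow 2).add (((hasDerivAt_id v).const_mul 2).mul_const r)).congr_deriv ?_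
    norm_num
    ring
  refine ((hlin.add (hdisc.sqrt hΔ.ne')).div (hasDerivAt_id v) hv).congr_deriv ?_
  have hs := Real.sq_sqrt hΔ.le
  have hs0 := (Real.sqrt_pos.mpr hΔ).ne'
  rw [mul_dTwo_sub_eq hv hΔ.le, dTwo_sub_dOne, dTwo]
  simp only [Pi.add_apply, id]
  generalize Real.sqrt ((v / 2 - α) ^ 2 + 2 * v * r) = s at hs hs0 ⊢
  field_simp
  linear_combination (-4) * hs

end

/-- Behaviour of the larger root `d₂(v)` as a function of the squared volatility `v`:
the derivative equals `2(α d₂ − r)/(v²(d₂ − d₁))`, one has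
`α d₂ − r = (v/2) d₂ (1 − d₂)`, the sign of the derivative matches the sign of
`d₂(1 − d₂)`, and for `r > 0` the sign is determined by the position of `α` relative
to `r`. -/
theorem stmt_4 (α r v : ℝ) (hv : 0 < v)
    (hΔ : 0 < (v / 2 - α) ^ 2 + 2 * v * r) :
    HasDerivAt (dTwo α r)
      (2 * (α * dTwo α r v - r) / (v ^ 2 * (dTwo α r v - dOne α r v))) v ∧
    α * dTwo α r v - r = (v / 2) * dTwo α r v * (1 - dTwo α r v) ∧
    ((0 < dTwo α r v ∧ dTwo α r v < 1) →
      0 < 2 * (α * dTwo α r v - r) / (v ^ 2 * (dTwo α r v - dOne α r v))) ∧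
    ((dTwo α r v = 0 ∨ dTwo α r v = 1) →
      2 * (α * dTwo α r v - r) / (v ^ 2 * (dTwo α r v - dOne α r v)) = 0) ∧
    ((dTwo α r v < 0 ∨ 1 < dTwo α r v) →
      2 * (α * dTwo α r v - r) / (v ^ 2 * (dTwo α r v - dOne α r v)) < 0) ∧
    (0 < r →
      (α < r → 2 * (α * dTwo α r v - r) / (v ^ 2 * (dTwo α r v - dOne α r v)) < 0) ∧
      (α = r → 2 * (α * dTwo α r v - r) / (v ^ 2 * (dTwo α r v - dOne α r v)) = 0) ∧
      (r < α → 0 < 2 * (α * dTwo α r v - r) / (v ^ 2 * (dTwo α r v - dOne α r v)))) := by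
  have hnum := mul_dTwo_sub_eq hv.ne' hΔ.le
  have hden : 0 < v ^ 2 * (dTwo α r v - dOne α r v) :=
    mul_pos (by positivity) (sub_pos.mpr (dOne_lt_dTwo hv hΔ))
  set d := dTwo α r v
  have pos (h : 0 < d ∧ d < 1) : 0 < 2 * (α * d - r) / (v ^ 2 * (d - dOne α r v)) := by
    rw [hnum]
    have := mul_pos h.1 (sub_pos.mpr h.2)
    exact div_pos (by nlinarith) hden
  have zero (h : d = 0 ∨ d = 1) : 2 * (α * d - r) / (v ^ 2 * (d - dOne α r v)) = 0 := by
    rw [hnum]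
    rcases h with h | h <;> simp [h]
  have neg (h : d < 0 ∨ 1 < d) : 2 * (α * d - r) / (v ^ 2 * (d - dOne α r v)) < 0 := by
    rw [hnum]
    have : d * (1 - d) < 0 := by
      rcases h with h | h
      · exact mul_neg_of_neg_of_pos h (by linarith)
      · exact mul_neg_of_pos_of_neg (by linarith) (by linarith)
    exact div_neg_of_neg_of_pos (by nlinarith) hden
  refine ⟨hasDerivAt_dTwo hv.ne' hΔ, hnum, pos, zero, neg, fun hr => ⟨?_, ?_, ?_⟩⟩
  · exact fun h => neg (Or.inr ((one_lt_dTwo_iff hv hr).mpr h))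
  · exact fun h => zero (Or.inr ((dTwo_eq_one_iff hv hr).mpr h))
  · exact fun h => pos ⟨(dOne_neg_and_dTwo_pos hv hr).2, (dTwo_lt_one_iff hv hr).mpr h⟩
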